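/- arXiv:0707.1466 — 2 statements merged into one kernel-verified Lean document; each statement's English description precedes it below -/
import Mathlib

section
/- With the inductive definitions a₀ = a, t₀ = t, e₀ = e ≥ 0, s_r(n−r) + t_r = t_{r−1} + e_{r−1} with 0 ≤ t_r ≤ n−r−1, a_r = a_{r−1} − s_r, e_r = e_{r−1} + s_r, and l_r, m_r defined by a_r = l_r(n−r−1) + m_r + t_r with 0 ≤ m_r ≤ n−r−2, assume e₀ ≤ l₀. Then for all 0 ≤ r ≤ n−2: e₀ ≤ e_r ≤ l_r − l₀ + e₀ ≤ l_r. -/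
theorem stmt_7 (n : ℤ) (hn : 2 ≤ n) (a t e s l m : ℕ → ℤ)
    (ht0 : 0 ≤ t 0) (ht0' : t 0 ≤ n - 1)
    (he0 : 0 ≤ e 0) (he0l : e 0 ≤ l 0)
    (hrec : ∀ r : ℕ, 1 ≤ r → (r : ℤ) ≤ n - 2 →
      s r * (n - r) + t r = t (r - 1) + e (r - 1) ∧
      0 ≤ t r ∧ t r ≤ n - r - 1 ∧
      a r = a (r - 1) - s r ∧ e r = e (r - 1) + s r)
    (hlm : ∀ r : ℕ, (r : ℤ) ≤ n - 2 →
      a r = l r * (n - r - 1) + m r + t r ∧ 0 ≤ m r ∧ m r ≤ n - r - 2) :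
    ∀ r : ℕ, (r : ℤ) ≤ n - 2 →
      e 0 ≤ e r ∧ e r ≤ l r - l 0 + e 0 ∧ l r - l 0 + e 0 ≤ l r := by
  intro r
  induction r with
  | zero => intro _; exact ⟨le_refl _, by linarith, by linarith⟩
  | succ k ih =>
    intro hr
    have hk : (k : ℤ) ≤ n - 2 := by push_cast at hr ⊢; linarith
    obtain ⟨IH1, IH2, IH3⟩ := ih hk
    have hel : e k ≤ l k := IH2.trans IH3
    have htk : 0 ≤ t k := by
      rcases Nat.eq_zero_or_pos k with h | h
      · subst h; exact ht0
      · exact (hrec k h hk).2.1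
    obtain ⟨h1, h2, h3, h4, h5⟩ := hrec (k + 1) (by omega) hr
    obtain ⟨g1, g2, g3⟩ := hlm k hk
    obtain ⟨f1, f2, f3⟩ := hlm (k + 1) hr
    have hk1 : ((k + 1 : ℕ) : ℤ) = (k : ℤ) + 1 := by push_cast; ring
    rw [hk1] at h1 h3 f1 f3
    have hsub : (k + 1) - 1 = k := rfl
    rw [hsub] at h1 h4 h5
    have hek : 0 ≤ e k := le_trans he0 IH1
    have hM : (2 : ℤ) ≤ n - (k : ℤ) - 1 := by push_cast at hr; linarith
    -- s (k+1) ≥ 0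
    have hs : 0 ≤ s (k + 1) := by
      by_contra h
      push_neg at h
      have hs1 : s (k + 1) ≤ -1 := by linarith
      have : s (k + 1) * (n - ((k : ℤ) + 1)) ≤ -1 * (n - ((k : ℤ) + 1)) :=
        mul_le_mul_of_nonneg_right hs1 (by linarith)
      linarith
    -- l (k+1) - l k - s (k+1) ≥ 0
    have hD : 0 ≤ l (k + 1) - l k - s (k + 1) := by
      have key : (n - (k : ℤ) - 2) * (l (k + 1) - l k - s (k + 1))
          = m k - m (k + 1) + l k - e k := by
        have := f1
        rw [h4, g1] at this
        nlinarith [this, h1]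
      by_contra h
      push_neg at h
      have hD1 : l (k + 1) - l k - s (k + 1) ≤ -1 := by linarith
      have : (n - (k : ℤ) - 2) * (l (k + 1) - l k - s (k + 1))
          ≤ (n - (k : ℤ) - 2) * (-1) :=
        mul_le_mul_of_nonneg_left hD1 (by linarith)
      linarith
    exact ⟨by linarith, by linarith, by linarith⟩
end

section
/- Let a, t, e be integers with 0 ≤ t ≤ 1, a − t ≥ 2, 1 ≤ e ≤ a−t−1. Define P_e(q) = (1−q^{a−t−e})(1−q^{a−t−e+1})(1−q^{2e+t+1})/((1−q)²(1−q²)) as a rational function over ℚ. Then P_e(q) = P_{e−1}(q) (as rational functions) if and only if 3e + 2t = a + 1. -/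
noncomputable def hodgeG (a t : ℤ) (e : ℤ) : RatFunc ℚ :=
  let q : RatFunc ℚ := RatFunc.X
  ((1 - q ^ (a - t - e)) * (1 - q ^ (a - t - e + 1)) * (1 - q ^ (2 * e + t + 1))) /
    ((1 - q) ^ 2 * (1 - q ^ 2))

lemma X_pow_eq_iff {j l : ℕ} (h : (RatFunc.X : RatFunc ℚ) ^ j = RatFunc.X ^ l) : j = l := by
  have h2 : (Polynomial.X : Polynomial ℚ) ^ j = Polynomial.X ^ l := by
    apply IsFractionRing.injective (Polynomial ℚ) (RatFunc ℚ)
    simpa [map_pow, RatFunc.algebraMap_X] using h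
  have h3 := congrArg Polynomial.natDegree h2
  simpa using h3

lemma one_sub_X_pow_ne {j : ℕ} (hj : 1 ≤ j) : (1 : RatFunc ℚ) - RatFunc.X ^ j ≠ 0 := by
  intro h
  have h1 : (RatFunc.X : RatFunc ℚ) ^ j = RatFunc.X ^ 0 := by
    rw [pow_zero]; linear_combination -h
  have := X_pow_eq_iff h1
  omega

theorem stmt_11 (a t e : ℤ) (ht0 : 0 ≤ t) (ht1 : t ≤ 1) (hat : 2 ≤ a - t)
    (he1 : 1 ≤ e) (he2 : e ≤ a - t - 1) :
    hodgeG a t e = hodgeG a t (e - 1) ↔ 3 * e + 2 * t = a + 1 := by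
  obtain ⟨n, hn⟩ : ∃ n : ℕ, a - t - e = (n : ℤ) :=
    ⟨(a - t - e).toNat, (Int.toNat_of_nonneg (by omega)).symm⟩
  obtain ⟨k, hk⟩ : ∃ k : ℕ, 2 * e + t - 1 = (k : ℤ) :=
    ⟨(2 * e + t - 1).toNat, (Int.toNat_of_nonneg (by omega)).symm⟩
  have hn1 : 1 ≤ n := by omega
  have hk1 : 1 ≤ k := by omega
  have e2 : a - t - e + 1 = ((n + 1 : ℕ) : ℤ) := by push_cast; omega
  have e3 : 2 * e + t + 1 = ((k + 2 : ℕ) : ℤ) := by push_cast; omega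
  have e4 : a - t - (e - 1) = ((n + 1 : ℕ) : ℤ) := by push_cast; omega
  have e5 : a - t - (e - 1) + 1 = ((n + 2 : ℕ) : ℤ) := by push_cast; omega
  have e6 : 2 * (e - 1) + t + 1 = ((k : ℕ) : ℤ) := by push_cast; omega
  simp only [hodgeG]
  rw [e5, e4, e2, e3, e6, hn]
  simp only [zpow_natCast]
  set q : RatFunc ℚ := RatFunc.X with hq
  have hD : ((1 : RatFunc ℚ) - q) ^ 2 * (1 - q ^ 2) ≠ 0 := by
    apply mul_ne_zero
    · apply pow_ne_zero
      simpa using one_sub_X_pow_ne (le_refl 1)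
    · exact one_sub_X_pow_ne (by norm_num)
  rw [div_eq_div_iff hD hD]
  constructor
  · intro h
    have h2 : ((1:RatFunc ℚ) - q ^ n) * (1 - q ^ (n + 1)) * (1 - q ^ (k + 2)) =
        (1 - q ^ (n + 1)) * (1 - q ^ (n + 2)) * (1 - q ^ k) :=
      mul_right_cancel₀ hD h
    have hne : (1 : RatFunc ℚ) - q ^ (n + 1) ≠ 0 := one_sub_X_pow_ne (by omega)
    have h' : ((1:RatFunc ℚ) - q ^ n) * (1 - q ^ (k + 2)) =
        (1 - q ^ (n + 2)) * (1 - q ^ k) := by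
      apply mul_left_cancel₀ hne
      linear_combination h2
    have h3 : (q ^ k - q ^ n) * ((1:RatFunc ℚ) - q ^ 2) = 0 := by
      linear_combination h'
    have h4 : q ^ k = q ^ n := by
      rcases mul_eq_zero.mp h3 with h5 | h5
      · linear_combination h5
      · exact absurd h5 (one_sub_X_pow_ne (by norm_num))
    have := X_pow_eq_iff h4
    omega
  · intro h
    have hkn : k = n := by omega
    subst hkn
    ring
end
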